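/- For n ≥ 4, the function f_n given by the DNF x_1x_2 ∨ ... ∨ x_1x_{n-1} ∨ x_2···x_n has n-1 minimal ones and n maximal zeros, i.e., 2n-1 extremal points in total; in particular, f_n has strictly more than n+1 extremal points. -/

import Mathlib

/-- `a` is a maximal false point of `f`. -/
def MaxZero {n : ℕ} (f : (Fin n → Bool) → Bool) (a : Fin n → Bool) : Prop :=
  f a = false ∧ ∀ b, (∀ j, a j ≤ b j) → b ≠ a → f b = true

/-- `a` is a minimal true point of `f`. -/
def MinOne {n : ℕ} (f : (Fin n → Bool) → Bool) (a : Fin n → Bool) : Prop :=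
  f a = true ∧ ∀ b, (∀ j, b j ≤ a j) → b ≠ a → f b = false

def fnPt (n i : ℕ) : Fin n → Bool := fun j => decide (j.1 = 0 ∨ j.1 = i)

def fnQt (n : ℕ) : Fin n → Bool := fun j => decide (j.1 ≠ 0)

def fnAt (n : ℕ) : Fin n → Bool := fun j => decide (j.1 = 0 ∨ j.1 = n - 1)

def fnZt (n i : ℕ) : Fin n → Bool := fun j => decide (j.1 ≠ 0 ∧ j.1 ≠ i)

lemma fn_exists_diff {n : ℕ} {a b : Fin n → Bool} (h : ∀ j, b j ≤ a j) (hne : b ≠ a) :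
    ∃ j, b j = false ∧ a j = true := by
  obtain ⟨j, hj⟩ := Function.ne_iff.mp hne
  refine ⟨j, ?_, ?_⟩ <;> (have := h j; revert this hj; cases b j <;> cases a j <;> simp)

lemma fn_le_of_le {x y : Bool} (h : x ≤ y) (hx : x = true) : y = true := by
  subst hx; revert h; cases y <;> decide

lemma fn_le_of_le' {x y : Bool} (h : x ≤ y) (hy : y = false) : x = false := by
  subst hy; revert h; cases x <;> decide



theorem fn_minone_iff (n : ℕ) (hn : 4 ≤ n) (f : (Fin n → Bool) → Bool)
    (hf : ∀ x, f x = true ↔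
      ((x ⟨0, lt_of_lt_of_le (by norm_num) hn⟩ = true ∧ ∃ i : Fin n, 1 ≤ i.1 ∧ i.1 ≤ n - 2 ∧ x i = true) ∨
        (∀ i : Fin n, 1 ≤ i.1 → x i = true))) (a : Fin n → Bool) :
    MinOne f a ↔ a = fnQt n ∨ ∃ i, 1 ≤ i ∧ i ≤ n - 2 ∧ a = fnPt n i := by
  have hf' : ∀ x, f x = false ↔
      ¬ ((x ⟨0, by omega⟩ = true ∧ ∃ i : Fin n, 1 ≤ i.1 ∧ i.1 ≤ n - 2 ∧ x i = true) ∨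
        (∀ i : Fin n, 1 ≤ i.1 → x i = true)) := by
    intro x
    rw [← hf]
    cases f x <;> simp
  constructor
  · rintro ⟨h1, h2⟩
    rw [hf] at h1
    rcases h1 with ⟨h0, i, hi1, hi2, hai⟩ | hT
    · -- a = pt i
      right
      refine ⟨i.1, hi1, hi2, ?_⟩
      have key : ∀ j : Fin n, j ≠ ⟨0, by omega⟩ → j ≠ i → a j = false := by
        intro j hj0 hji
        by_contra haj
        have haj : a j = true := by revert haj; cases a j <;> simp
        have hb := h2 (Function.update a j false)
          (by intro k; by_cases hk : k = j <;> simp [Function.update_apply, hk])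
          (by intro h; have := congrFun h j; simp [haj] at this)
        rw [hf'] at hb
        apply hb
        left
        refine ⟨by rwa [Function.update_apply, if_neg (Ne.symm hj0)], i, hi1, hi2, ?_⟩
        rwa [Function.update_apply, if_neg (Ne.symm hji)]
      funext k
      by_cases hk0 : k.1 = 0
      · have : k = (⟨0, by omega⟩ : Fin n) := Fin.ext hk0
        rw [this, h0]
        simp [fnPt]
      · by_cases hki : k = i
        · rw [hki, hai]
          simp [fnPt, hki]
        · rw [key k (by intro h; exact hk0 (by rw [h])) hki]
          have : ¬ (k.1 = 0 ∨ k.1 = i.1) := by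
            rintro (h | h)
            · exact hk0 h
            · exact hki (Fin.ext h)
          simp [fnPt, this]
    · -- a = qt
      left
      have h0 : a ⟨0, by omega⟩ = false := by
        by_contra h0
        have h0 : a ⟨0, by omega⟩ = true := by revert h0; cases a _ <;> simp
        have hb := h2 (Function.update a ⟨0, by omega⟩ false)
          (by intro k; by_cases hk : k = (⟨0, by omega⟩ : Fin n) <;>
            simp [Function.update_apply, hk])
          (by intro h; have := congrFun h ⟨0, by omega⟩; simp [h0] at this)
        rw [hf'] at hb
        apply hb
        right
        intro i hi
        rw [Function.update_apply, if_neg (by intro h; simp [h] at hi)]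
        exact hT i hi
      funext k
      by_cases hk0 : k.1 = 0
      · have : k = (⟨0, by omega⟩ : Fin n) := Fin.ext hk0
        rw [this, h0]
        simp [fnQt]
      · rw [hT k (by omega)]
        simp [fnQt, hk0]
  · rintro (rfl | ⟨i, hi1, hi2, rfl⟩)
    · constructor
      · rw [hf]
        right
        intro i hi
        simp [fnQt]
        omega
      · intro b hb hne
        obtain ⟨j, hbj, hqj⟩ := fn_exists_diff hb hne
        rw [hf']
        rintro (⟨h0, _⟩ | hT)
        · have : fnQt n ⟨0, by omega⟩ = false := by simp [fnQt]
          rw [fn_le_of_le' (hb _) this] at h0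
          simp at h0
        · have hj1 : 1 ≤ j.1 := by
            by_contra h
            have : j.1 = 0 := by omega
            simp [fnQt, this] at hqj
          rw [hT j hj1] at hbj
          simp at hbj
    · constructor
      · rw [hf]
        left
        refine ⟨by simp [fnPt], ⟨i, by omega⟩, by simpa using hi1, by simpa using hi2, ?_⟩
        simp [fnPt]
      · intro b hb hne
        obtain ⟨j, hbj, hpj⟩ := fn_exists_diff hb hne
        have hj : j.1 = 0 ∨ j.1 = i := by simpa [fnPt] using hpj
        rw [hf']
        rintro (⟨h0, k, hk1, hk2, hbk⟩ | hT)
        · -- j must be i, and then k = j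
          have hji : j.1 = i := by
            rcases hj with hj | hj
            · exfalso
              have : j = (⟨0, by omega⟩ : Fin n) := Fin.ext hj
              rw [this] at hbj
              rw [hbj] at h0
              simp at h0
            · exact hj
          have hki : k.1 = i := by
            have := fn_le_of_le (hb k) hbk
            have : k.1 = 0 ∨ k.1 = i := by simpa [fnPt] using this
            omega
          have : k = j := Fin.ext (by omega)
          rw [this, hbj] at hbk
          simp at hbk
        · -- find middle index ≠ i
          set m : ℕ := if i = 1 then 2 else 1 with hm
          have hm1 : 1 ≤ m := by rw [hm]; split <;> omega
          have hmn : m < n := by rw [hm]; split <;> omega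
          have hmi : m ≠ i := by rw [hm]; split <;> omega
          have hpm : fnPt n i ⟨m, hmn⟩ = false := by
            simp [fnPt]
            omega
          have := fn_le_of_le' (hb ⟨m, hmn⟩) hpm
          rw [hT ⟨m, hmn⟩ hm1] at this
          simp at this

theorem fn_maxzero_iff (n : ℕ) (hn : 4 ≤ n) (f : (Fin n → Bool) → Bool)
    (hf : ∀ x, f x = true ↔
      ((x ⟨0, lt_of_lt_of_le (by norm_num) hn⟩ = true ∧ ∃ i : Fin n, 1 ≤ i.1 ∧ i.1 ≤ n - 2 ∧ x i = true) ∨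
        (∀ i : Fin n, 1 ≤ i.1 → x i = true))) (a : Fin n → Bool) :
    MaxZero f a ↔ a = fnAt n ∨ ∃ i, 1 ≤ i ∧ i ≤ n - 1 ∧ a = fnZt n i := by
  have hf' : ∀ x, f x = false ↔
      ¬ ((x ⟨0, by omega⟩ = true ∧ ∃ i : Fin n, 1 ≤ i.1 ∧ i.1 ≤ n - 2 ∧ x i = true) ∨
        (∀ i : Fin n, 1 ≤ i.1 → x i = true)) := by
    intro x; rw [← hf]; cases f x <;> simp
  constructor
  · rintro ⟨h1, h2⟩
    rw [hf'] at h1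
    push_neg at h1
    obtain ⟨hPM, hT⟩ := h1
    obtain ⟨j, hj1, haj⟩ := hT
    have haj : a j = false := by revert haj; cases a j <;> simp
    by_cases h0 : a ⟨0, by omega⟩ = true
    · -- a = At
      left
      have hmid : ∀ i : Fin n, 1 ≤ i.1 → i.1 ≤ n - 2 → a i = false := by
        intro i hi1 hi2
        by_contra hai
        have hai : a i = true := by revert hai; cases a i <;> simp
        exact hPM h0 i hi1 hi2 hai
      have hlast : a ⟨n - 1, by omega⟩ = true := by
        by_contra hl
        have hl : a ⟨n - 1, by omega⟩ = false := by revert hl; cases a _ <;> simp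
        have hb := h2 (Function.update a ⟨n - 1, by omega⟩ true)
          (by intro k; by_cases hk : k = (⟨n - 1, by omega⟩ : Fin n) <;>
            simp [Function.update_apply, hk])
          (by intro h; have := congrFun h ⟨n - 1, by omega⟩; simp [hl] at this)
        rw [hf] at hb
        have hne1 : ∀ i : Fin n, i.1 ≤ n - 2 → i ≠ (⟨n - 1, by omega⟩ : Fin n) := by
          intro i hi h
          have := congrArg Fin.val h
          simp only [] at this
          omega
        rcases hb with ⟨_, i, hi1, hi2, hbi⟩ | hbT
        · rw [Function.update_apply, if_neg (hne1 i hi2)] at hbi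
          rw [hmid i hi1 hi2] at hbi
          simp at hbi
        · have := hbT ⟨1, by omega⟩ (by simp)
          rw [Function.update_apply, if_neg (hne1 ⟨1, by omega⟩ (by simp; omega))] at this
          rw [hmid ⟨1, by omega⟩ (by simp) (by simp; omega)] at this
          simp at this
      funext k
      by_cases hk0 : k.1 = 0
      · have : k = (⟨0, by omega⟩ : Fin n) := Fin.ext hk0
        rw [this, h0]; simp [fnAt]
      · by_cases hkl : k.1 = n - 1
        · have : k = (⟨n - 1, by omega⟩ : Fin n) := Fin.ext hkl
          rw [this, hlast]; simp [fnAt]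
        · rw [hmid k (by omega) (by have := k.2; omega)]
          simp [fnAt]; omega
    · -- a = zt j
      right
      have h0 : a ⟨0, by omega⟩ = false := by revert h0; cases a _ <;> simp
      have key : ∀ k : Fin n, 1 ≤ k.1 → k ≠ j → a k = true := by
        intro k hk1 hkj
        by_contra hak
        have hak : a k = false := by revert hak; cases a k <;> simp
        have hb := h2 (Function.update a j true)
          (by intro m; by_cases hm : m = j <;> simp [Function.update_apply, hm])
          (by intro h; have := congrFun h j; simp [haj] at this)
        rw [hf] at hb
        have hne0 : (⟨0, by omega⟩ : Fin n) ≠ j := by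
          intro h
          have := congrArg Fin.val h
          simp only [] at this
          omega
        rcases hb with ⟨hb0, _⟩ | hbT
        · rw [Function.update_apply, if_neg hne0] at hb0
          rw [h0] at hb0; simp at hb0
        · have := hbT k hk1
          rw [Function.update_apply, if_neg hkj, hak] at this
          simp at this
      refine ⟨j.1, hj1, by have := j.2; omega, ?_⟩
      funext k
      by_cases hk0 : k.1 = 0
      · have : k = (⟨0, by omega⟩ : Fin n) := Fin.ext hk0
        rw [this, h0]; simp [fnZt, hk0]
      · by_cases hkj : k = j
        · rw [hkj, haj]; simp [fnZt]
        · rw [key k (by omega) hkj]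
          have : k.1 ≠ j.1 := fun h => hkj (Fin.ext h)
          simp [fnZt, hk0, this]
  · rintro (rfl | ⟨i, hi1, hi2, rfl⟩)
    · constructor
      · rw [hf']
        rintro (⟨_, k, hk1, hk2, hak⟩ | hT)
        · have : ¬ (k.1 = 0 ∨ k.1 = n - 1) := by omega
          simp [fnAt, this] at hak
        · have := hT ⟨1, by omega⟩ (by simp)
          simp [fnAt] at this
          omega
      · intro b hb hne
        obtain ⟨k, hAk, hbk⟩ := fn_exists_diff (a := b) (b := fnAt n) hb (Ne.symm hne)
        rw [hf]
        left
        have hk : ¬ (k.1 = 0 ∨ k.1 = n - 1) := by simpa [fnAt] using hAk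
        push_neg at hk
        refine ⟨fn_le_of_le (hb ⟨0, by omega⟩) (by simp [fnAt]), k, by omega,
          by have := k.2; omega, hbk⟩
    · constructor
      · rw [hf']
        rintro (⟨h0, _⟩ | hT)
        · simp [fnZt] at h0
        · have := hT ⟨i, by omega⟩ (by simpa using hi1)
          simp [fnZt] at this
      · intro b hb hne
        obtain ⟨k, hzk, hbk⟩ := fn_exists_diff (a := b) (b := fnZt n i) hb (Ne.symm hne)
        rw [hf]
        have hk : k.1 = 0 ∨ k.1 = i := by
          have : ¬ (k.1 ≠ 0 ∧ k.1 ≠ i) := by simpa [fnZt] using hzk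
          omega
        rcases hk with hk | hk
        · -- b 0 = true, find middle witness
          left
          have hb0 : b ⟨0, by omega⟩ = true := by
            have : k = (⟨0, by omega⟩ : Fin n) := Fin.ext hk
            rwa [this] at hbk
          set m : ℕ := if i = 1 then 2 else 1 with hm
          have hm1 : 1 ≤ m := by rw [hm]; split <;> omega
          have hmn : m ≤ n - 2 := by rw [hm]; split <;> omega
          have hmi : m ≠ i := by rw [hm]; split <;> omega
          refine ⟨hb0, ⟨m, by omega⟩, by simpa using hm1, by simpa using hmn, ?_⟩
          exact fn_le_of_le (hb ⟨m, by omega⟩) (by simp [fnZt]; constructor <;> omega)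
        · -- b i = true, all coords ≥ 1 true
          right
          intro l hl
          by_cases hli : l.1 = i
          · have : l = k := Fin.ext (by omega)
            rwa [this]
          · exact fn_le_of_le (hb l) (by simp [fnZt]; constructor <;> omega)

lemma fn_card1 (n : ℕ) (hn : 4 ≤ n) :
    (insert (fnQt n) ((Finset.Icc 1 (n - 2)).image (fnPt n))).card = n - 1 := by
  rw [Finset.card_insert_of_notMem, Finset.card_image_of_injOn, Nat.card_Icc]
  · omega
  · intro i hi i' hi' h
    simp only [Finset.mem_coe, Finset.mem_Icc] at hi hi'
    have := congrFun h ⟨i, by omega⟩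
    simp only [fnPt] at this
    rw [decide_eq_decide] at this
    have h2 := this.mp (Or.inr trivial)
    omega
  · intro h
    rw [Finset.mem_image] at h
    obtain ⟨i, hi, h⟩ := h
    rw [Finset.mem_Icc] at hi
    have := congrFun h ⟨0, by omega⟩
    simp [fnPt, fnQt] at this

lemma fn_card2 (n : ℕ) (hn : 4 ≤ n) :
    (insert (fnAt n) ((Finset.Icc 1 (n - 1)).image (fnZt n))).card = n := by
  rw [Finset.card_insert_of_notMem, Finset.card_image_of_injOn, Nat.card_Icc]
  · omega
  · intro i hi i' hi' h
    simp only [Finset.mem_coe, Finset.mem_Icc] at hi hi'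
    have := congrFun h ⟨i, by omega⟩
    simp only [fnZt] at this
    rw [decide_eq_decide] at this
    have h2 := not_iff_not.mpr this
    have h3 : ¬ (i ≠ 0 ∧ i ≠ i) := by simp
    have h4 := h2.mp h3
    rw [not_and_or] at h4
    omega
  · intro h
    rw [Finset.mem_image] at h
    obtain ⟨i, hi, h⟩ := h
    rw [Finset.mem_Icc] at hi
    have := congrFun h ⟨0, by omega⟩
    simp [fnAt, fnZt] at this

/-- `f_n` has `n-1` minimal ones, `n` maximal zeros, hence `2n-1 > n+1` extremal points. -/
theorem fn_extremal_count (n : ℕ) (hn : 4 ≤ n) (f : (Fin n → Bool) → Bool)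
    (hf : ∀ x, f x = true ↔
      ((x ⟨0, by omega⟩ = true ∧ ∃ i : Fin n, 1 ≤ i.1 ∧ i.1 ≤ n - 2 ∧ x i = true) ∨
        (∀ i : Fin n, 1 ≤ i.1 → x i = true))) :
    {a : Fin n → Bool | MinOne f a}.ncard = n - 1 ∧
    {a : Fin n → Bool | MaxZero f a}.ncard = n ∧
    {a : Fin n → Bool | MaxZero f a ∨ MinOne f a}.ncard = 2 * n - 1 ∧
    n + 1 < 2 * n - 1 := by
  set S1 := insert (fnQt n) ((Finset.Icc 1 (n - 2)).image (fnPt n)) with hS1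
  set S2 := insert (fnAt n) ((Finset.Icc 1 (n - 1)).image (fnZt n)) with hS2
  have e1 : {a : Fin n → Bool | MinOne f a} = ↑S1 := by
    ext a
    rw [Set.mem_setOf_eq, fn_minone_iff n hn f hf a, hS1]
    simp only [Finset.coe_insert, Set.mem_insert_iff, Finset.mem_coe, Finset.mem_image,
      Finset.mem_Icc]
    constructor
    · rintro (h | ⟨i, h1, h2, h3⟩)
      · exact Or.inl h
      · exact Or.inr ⟨i, ⟨h1, h2⟩, h3.symm⟩
    · rintro (h | ⟨i, ⟨h1, h2⟩, h3⟩)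
      · exact Or.inl h
      · exact Or.inr ⟨i, h1, h2, h3.symm⟩
  have e2 : {a : Fin n → Bool | MaxZero f a} = ↑S2 := by
    ext a
    rw [Set.mem_setOf_eq, fn_maxzero_iff n hn f hf a, hS2]
    simp only [Finset.coe_insert, Set.mem_insert_iff, Finset.mem_coe, Finset.mem_image,
      Finset.mem_Icc]
    constructor
    · rintro (h | ⟨i, h1, h2, h3⟩)
      · exact Or.inl h
      · exact Or.inr ⟨i, ⟨h1, h2⟩, h3.symm⟩
    · rintro (h | ⟨i, ⟨h1, h2⟩, h3⟩)
      · exact Or.inl h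
      · exact Or.inr ⟨i, h1, h2, h3.symm⟩
  have c1 : S1.card = n - 1 := fn_card1 n hn
  have c2 : S2.card = n := fn_card2 n hn
  have hdisj : Disjoint S2 S1 := by
    rw [Finset.disjoint_left]
    intro a ha hb
    have h1 : MaxZero f a := by
      have : a ∈ {a : Fin n → Bool | MaxZero f a} := by rw [e2]; exact_mod_cast ha
      exact this
    have h2 : MinOne f a := by
      have : a ∈ {a : Fin n → Bool | MinOne f a} := by rw [e1]; exact_mod_cast hb
      exact this
    have h3 := h2.1
    rw [h1.1] at h3
    exact absurd h3 (by simp)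
  have e3 : {a : Fin n → Bool | MaxZero f a ∨ MinOne f a} = ↑(S2 ∪ S1) := by
    rw [Set.setOf_or, e1, e2, Finset.coe_union]
  refine ⟨?_, ?_, ?_, by omega⟩
  · rw [e1, Set.ncard_coe_finset, c1]
  · rw [e2, Set.ncard_coe_finset, c2]
  · rw [e3, Set.ncard_coe_finset, Finset.card_union_of_disjoint hdisj, c1, c2]
    omega
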